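/- Let m ≥ 1 and N = 2^m, and let H ∈ ℝ^{N×N} be the normalized Hadamard matrix, the m-fold Kronecker power of (1/√2)·[[1,1],[1,−1]]. Then there exist matrices M_0, M_1, …, M_{m−1} ∈ ℝ^{N×N}, where each M_k is a butterfly factor at level k (i.e., (M_k)_{i,j} = 0 whenever i ≠ j and the bitwise XOR of i and j is not equal to 2^{m−1−k}), and a permutation σ of Fin N with permutation matrix P_σ, such that H = M_0 · M_1 ⋯ M_{m−1} · P_σ. That is, the Hadamard matrix lies in the class BP. -/
import Mathlib


/-- `M ∈ 𝔽^{2^m × 2^m}` is a *butterfly factor at level `k`* (`0 ≤ k < m`) if `M_{i,j} = 0`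
whenever `i ≠ j` and the bitwise XOR of `i` and `j` is not `2^(m−1−k)`. -/
def IsButterflyFactor {𝔽 : Type*} [Zero 𝔽] (m k : ℕ)
    (M : Matrix (Fin (2 ^ m)) (Fin (2 ^ m)) 𝔽) : Prop :=
  ∀ i j : Fin (2 ^ m), i ≠ j → Nat.xor (i : ℕ) (j : ℕ) ≠ 2 ^ (m - 1 - k) → M i j = 0

/-- A *butterfly matrix* is a product `M_0 · M_1 ⋯ M_{m−1}` where each `M_k` is a butterfly
factor at level `k`. -/
def IsButterflyMatrix {𝔽 : Type*} [Semiring 𝔽] (m : ℕ)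
    (B : Matrix (Fin (2 ^ m)) (Fin (2 ^ m)) 𝔽) : Prop :=
  ∃ M : Fin m → Matrix (Fin (2 ^ m)) (Fin (2 ^ m)) 𝔽,
    (∀ k : Fin m, IsButterflyFactor m (k : ℕ) (M k)) ∧ B = (List.ofFn M).prod

open Kronecker

/-- The 2×2 normalized Hadamard matrix `(1/√2)·[[1,1],[1,−1]]`. -/
noncomputable def H2 : Matrix (Fin 2) (Fin 2) ℝ :=
  (Real.sqrt 2)⁻¹ • !![1, 1; 1, -1]

/-- The `m`-fold Kronecker power of `H2` (the normalized Hadamard matrix of size `2^m`). -/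
noncomputable def hadamardPow : (m : ℕ) → Matrix (Fin (2 ^ m)) (Fin (2 ^ m)) ℝ
  | 0 => 1
  | m + 1 =>
    Matrix.reindex (finProdFinEquiv.trans (finCongr (pow_succ' 2 m).symm))
      (finProdFinEquiv.trans (finCongr (pow_succ' 2 m).symm))
      (H2 ⊗ₖ hadamardPow m)

private lemma xor_key (m a b x y : ℕ) (hx : x < 2 ^ m) (hy : y < 2 ^ m) :
    Nat.xor (x + 2 ^ m * a) (y + 2 ^ m * b) = Nat.xor x y + 2 ^ m * Nat.xor a b := by
  have h1 : x ^^^ y < 2 ^ m := Nat.xor_lt_two_pow hx hy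
  simp only [show ∀ u v : ℕ, Nat.xor u v = u ^^^ v from fun _ _ => rfl]
  apply Nat.eq_of_testBit_eq
  intro j
  rw [Nat.add_comm x, Nat.add_comm y, Nat.add_comm (x ^^^ y)]
  rw [Nat.testBit_xor, Nat.testBit_two_pow_mul_add _ hx, Nat.testBit_two_pow_mul_add _ hy,
    Nat.testBit_two_pow_mul_add _ h1]
  by_cases h : j < m <;> simp [h, Nat.testBit_xor]

private def eqv (m : ℕ) : Fin 2 × Fin (2 ^ m) ≃ Fin (2 ^ (m + 1)) :=
  finProdFinEquiv.trans (finCongr (pow_succ' 2 m).symm)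

private lemma nat_xor_self (x : ℕ) : Nat.xor x x = 0 := Nat.xor_self x

private lemma eqv_val (m : ℕ) (p : Fin 2 × Fin (2 ^ m)) :
    ((eqv m p : Fin (2 ^ (m + 1))) : ℕ) = (p.2 : ℕ) + 2 ^ m * (p.1 : ℕ) := rfl

private lemma prod_push (m : ℕ) (L : List (Matrix (Fin (2 ^ m)) (Fin (2 ^ m)) ℝ)) :
    Matrix.reindex (eqv m) (eqv m) ((1 : Matrix (Fin 2) (Fin 2) ℝ) ⊗ₖ L.prod)
      = (L.map fun A => Matrix.reindex (eqv m) (eqv m)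
          ((1 : Matrix (Fin 2) (Fin 2) ℝ) ⊗ₖ A)).prod := by
  induction L with
  | nil => simp [Matrix.one_kronecker_one, Matrix.reindex_apply, Matrix.submatrix_one_equiv]
  | cons A L ih =>
    have hk : ((1 : Matrix (Fin 2) (Fin 2) ℝ) ⊗ₖ (A * L.prod))
        = ((1 : Matrix (Fin 2) (Fin 2) ℝ) ⊗ₖ A) * (1 ⊗ₖ L.prod) := by
      rw [← Matrix.mul_kronecker_mul, one_mul]
    rw [List.prod_cons, hk, List.map_cons, List.prod_cons, ← ih, Matrix.reindex_apply,
      Matrix.reindex_apply, Matrix.reindex_apply, Matrix.submatrix_mul_equiv]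

private lemma val_decomp (m : ℕ) (i : Fin (2 ^ (m + 1))) :
    (i : ℕ) = ((((eqv m).symm i).2 : ℕ)) + 2 ^ m * (((eqv m).symm i).1 : ℕ) := by
  conv_lhs => rw [← (eqv m).apply_symm_apply i]
  exact eqv_val m _

private lemma had_butterfly : ∀ m : ℕ,
    ∃ M : Fin m → Matrix (Fin (2 ^ m)) (Fin (2 ^ m)) ℝ,
      (∀ k : Fin m, IsButterflyFactor m (k : ℕ) (M k)) ∧
      hadamardPow m = (List.ofFn M).prod
  | 0 => ⟨Fin.elim0, fun k => k.elim0, by simp [hadamardPow]⟩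
  | (m + 1) => by
    obtain ⟨M, hM, hprod⟩ := had_butterfly m
    refine ⟨Fin.cases
        (Matrix.reindex (eqv m) (eqv m) (H2 ⊗ₖ (1 : Matrix (Fin (2 ^ m)) (Fin (2 ^ m)) ℝ)))
        (fun k => Matrix.reindex (eqv m) (eqv m) ((1 : Matrix (Fin 2) (Fin 2) ℝ) ⊗ₖ M k)),
      ?_, ?_⟩
    · intro k
      induction k using Fin.cases with
      | zero =>
        intro i j hij hxor
        simp only [Fin.cases_zero]
        set p := (eqv m).symm i with hp
        set q := (eqv m).symm j with hq
        rcases eq_or_ne p.2 q.2 with h2 | h2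
        · exfalso
          apply hxor
          have h1 : p.1 ≠ q.1 := by
            intro h1
            exact hij (by rw [← (eqv m).apply_symm_apply i, ← (eqv m).apply_symm_apply j,
              ← hp, ← hq, Prod.ext h1 h2])
          have hx1 : Nat.xor (p.1 : ℕ) (q.1 : ℕ) = 1 := by
            have := p.1.isLt
            have := q.1.isLt
            have hne : (p.1 : ℕ) ≠ (q.1 : ℕ) := fun h => h1 (Fin.val_injective h)
            interval_cases h : (p.1 : ℕ) <;> interval_cases h' : (q.1 : ℕ) <;> simp_all <;> decide
          rw [val_decomp m i, val_decomp m j, ← hp, ← hq,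
            xor_key m p.1 q.1 p.2 q.2 p.2.isLt q.2.isLt, h2, nat_xor_self _, hx1]
          simp
        · rw [Matrix.reindex_apply, Matrix.submatrix_apply, Matrix.kroneckerMap_apply,
            ← hp, ← hq, Matrix.one_apply_ne h2, mul_zero]
      | succ k =>
        intro i j hij hxor
        simp only [Fin.cases_succ]
        set p := (eqv m).symm i with hp
        set q := (eqv m).symm j with hq
        rcases eq_or_ne p.1 q.1 with h1 | h1
        · have h2 : p.2 ≠ q.2 := by
            intro h2
            exact hij (by rw [← (eqv m).apply_symm_apply i, ← (eqv m).apply_symm_apply j,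
              ← hp, ← hq, Prod.ext h1 h2])
          have hx : Nat.xor (p.2 : ℕ) (q.2 : ℕ) ≠ 2 ^ (m - 1 - (k : ℕ)) := by
            intro hcon
            apply hxor
            rw [val_decomp m i, val_decomp m j, ← hp, ← hq,
              xor_key m p.1 q.1 p.2 q.2 p.2.isLt q.2.isLt, h1, nat_xor_self _, Nat.mul_zero,
              Nat.add_zero, hcon]
            congr 1
            simp only [Fin.val_succ]
            omega
          rw [Matrix.reindex_apply, Matrix.submatrix_apply, Matrix.kroneckerMap_apply,
            ← hp, ← hq, hM k p.2 q.2 h2 hx, mul_zero]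
        · rw [Matrix.reindex_apply, Matrix.submatrix_apply, Matrix.kroneckerMap_apply,
            ← hp, ← hq, Matrix.one_apply_ne h1, zero_mul]
    · have hdef : hadamardPow (m + 1)
          = Matrix.reindex (eqv m) (eqv m) (H2 ⊗ₖ hadamardPow m) := rfl
      have hk : H2 ⊗ₖ (List.ofFn M).prod
          = (H2 ⊗ₖ (1 : Matrix (Fin (2 ^ m)) (Fin (2 ^ m)) ℝ))
            * ((1 : Matrix (Fin 2) (Fin 2) ℝ) ⊗ₖ (List.ofFn M).prod) := by
        rw [← Matrix.mul_kronecker_mul, mul_one, one_mul]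
      have hsplit : Matrix.reindex (eqv m) (eqv m)
            ((H2 ⊗ₖ (1 : Matrix (Fin (2 ^ m)) (Fin (2 ^ m)) ℝ))
              * ((1 : Matrix (Fin 2) (Fin 2) ℝ) ⊗ₖ (List.ofFn M).prod))
          = Matrix.reindex (eqv m) (eqv m)
              (H2 ⊗ₖ (1 : Matrix (Fin (2 ^ m)) (Fin (2 ^ m)) ℝ))
            * Matrix.reindex (eqv m) (eqv m)
              ((1 : Matrix (Fin 2) (Fin 2) ℝ) ⊗ₖ (List.ofFn M).prod) := by
        simp only [Matrix.reindex_apply, Matrix.submatrix_mul_equiv]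
      rw [hdef, hprod, hk, hsplit, prod_push, List.map_ofFn, List.ofFn_succ, List.prod_cons]
      simp only [Fin.cases_zero, Fin.cases_succ, Function.comp]
      rfl

/-- **The Hadamard matrix lies in the class BP.**  For `N = 2^m`, the normalized Hadamard
matrix factors as `M_0 · M_1 ⋯ M_{m−1} · P_σ` where each `M_k` is a butterfly factor at
level `k` and `P_σ` is a permutation matrix. -/
theorem hadamard_mem_BP (m : ℕ) (hm : 1 ≤ m) :
    ∃ (M : Fin m → Matrix (Fin (2 ^ m)) (Fin (2 ^ m)) ℝ) (σ : Equiv.Perm (Fin (2 ^ m))),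
      (∀ k : Fin m, IsButterflyFactor m (k : ℕ) (M k)) ∧
      hadamardPow m = (List.ofFn M).prod * σ.permMatrix ℝ := by
  obtain ⟨M, hM, hprod⟩ := had_butterfly m
  refine ⟨M, 1, hM, ?_⟩
  rw [show (1 : Equiv.Perm (Fin (2 ^ m))) = Equiv.refl _ from rfl, Equiv.Perm.permMatrix,
    Equiv.toPEquiv_refl, PEquiv.toMatrix_refl, mul_one, hprod]
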